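/- For a skew-symmetric bilinear form B on V and a Dirac structure L on V, the gauge transform τ_B(L) = {(x, η + B(x,·)) : (x,η) ∈ L} is again a Dirac structure on V, and τ defines an action of the additive group of skew-symmetric bilinear forms on V on the set of Dirac structures: τ_0 = id and τ_{B+B'} = τ_B ∘ τ_{B'}. -/

import Mathlib

open Module LinearMap

variable {V W U : Type*} [AddCommGroup V] [Module ℝ V] [FiniteDimensional ℝ V]
  [AddCommGroup W] [Module ℝ W] [FiniteDimensional ℝ W]
  [AddCommGroup U] [Module ℝ U] [FiniteDimensional ℝ U]

/-- The canonical symmetric pairing on `V ⊕ V*`. -/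
noncomputable def diracPairing (p q : V × Module.Dual ℝ V) : ℝ := (p.2 q.1 + q.2 p.1) / 2

/-- A subspace of `V ⊕ V*` is isotropic if the pairing vanishes on it. -/
def IsIsotropic (L : Submodule ℝ (V × Module.Dual ℝ V)) : Prop :=
  ∀ p ∈ L, ∀ q ∈ L, diracPairing p q = 0

/-- A Dirac structure: a maximally isotropic subspace. -/
def IsDirac (L : Submodule ℝ (V × Module.Dual ℝ V)) : Prop :=
  IsIsotropic L ∧ ∀ L' : Submodule ℝ (V × Module.Dual ℝ V), IsIsotropic L' → L ≤ L' → L' = L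

/-- The graph of a bivector `π : V* → V`. -/
def graphBiv (π : Module.Dual ℝ V →ₗ[ℝ] V) : Submodule ℝ (V × Module.Dual ℝ V) where
  carrier := {p | p.1 = π p.2}
  add_mem' := by
    intro a b ha hb
    simp only [Set.mem_setOf_eq, Prod.fst_add, Prod.snd_add, map_add] at *
    rw [ha, hb]
  zero_mem' := by simp
  smul_mem' := by
    intro c a ha
    simp only [Set.mem_setOf_eq, Prod.smul_fst, Prod.smul_snd, map_smul] at *
    rw [ha]

/-- Forward image of a Dirac structure along a linear map. -/
def Fwd (φ : V →ₗ[ℝ] W) (L : Submodule ℝ (V × Module.Dual ℝ V)) :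
    Submodule ℝ (W × Module.Dual ℝ W) where
  carrier := {q | ∃ x : V, q.1 = φ x ∧ (x, φ.dualMap q.2) ∈ L}
  add_mem' := by
    rintro a b ⟨x, hx, hxL⟩ ⟨y, hy, hyL⟩
    refine ⟨x + y, ?_, ?_⟩
    · simp [Prod.fst_add, hx, hy]
    · simpa [Prod.snd_add, Prod.mk_add_mk] using L.add_mem hxL hyL
  zero_mem' := ⟨0, by simp, by convert L.zero_mem using 1; exact Prod.ext (by simp) (by simp)⟩
  smul_mem' := by
    rintro c a ⟨x, hx, hxL⟩
    refine ⟨c • x, ?_, ?_⟩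
    · simp [Prod.smul_fst, hx]
    · simpa [Prod.smul_snd, Prod.smul_mk] using L.smul_mem c hxL

/-- Backward image of a Dirac structure along a linear map. -/
def Bwd (φ : V →ₗ[ℝ] W) (L : Submodule ℝ (W × Module.Dual ℝ W)) :
    Submodule ℝ (V × Module.Dual ℝ V) where
  carrier := {p | ∃ η : Module.Dual ℝ W, p.2 = φ.dualMap η ∧ (φ p.1, η) ∈ L}
  add_mem' := by
    rintro a b ⟨x, hx, hxL⟩ ⟨y, hy, hyL⟩
    refine ⟨x + y, ?_, ?_⟩
    · simp [Prod.snd_add, hx, hy]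
    · simpa [Prod.fst_add, Prod.mk_add_mk] using L.add_mem hxL hyL
  zero_mem' := ⟨0, by simp, by convert L.zero_mem using 1; exact Prod.ext (by simp) (by simp)⟩
  smul_mem' := by
    rintro c a ⟨x, hx, hxL⟩
    refine ⟨c • x, ?_, ?_⟩
    · simp [Prod.smul_snd, hx]
    · simpa [Prod.smul_fst, Prod.smul_mk] using L.smul_mem c hxL

/-- Gauge transformation of a Dirac structure by a 2-form `B : V → V*`. -/
def tau (B : V →ₗ[ℝ] Module.Dual ℝ V) (L : Submodule ℝ (V × Module.Dual ℝ V)) :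
    Submodule ℝ (V × Module.Dual ℝ V) where
  carrier := {p | (p.1, p.2 - B p.1) ∈ L}
  add_mem' := by
    intro a b ha hb
    have := L.add_mem ha hb
    simpa [Prod.mk_add_mk, Prod.fst_add, Prod.snd_add, map_add, add_sub_add_comm] using this
  zero_mem' := by
    show ((0 : V × Module.Dual ℝ V).1, (0 : V × Module.Dual ℝ V).2 - B (0 : V × Module.Dual ℝ V).1) ∈ L
    convert L.zero_mem using 1; exact Prod.ext (by simp) (by simp)
  smul_mem' := by
    intro c a ha
    have := L.smul_mem c ha
    simpa [Prod.smul_mk, Prod.smul_fst, Prod.smul_snd, smul_sub] using this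

/-- Orthogonal of a subspace with respect to a bilinear form `Ω : V → V*`. -/
def orth (Ω : V →ₗ[ℝ] Module.Dual ℝ V) (S : Submodule ℝ V) : Submodule ℝ V where
  carrier := {x | ∀ y ∈ S, Ω x y = 0}
  add_mem' := by
    intro a b ha hb y hy
    simp [map_add, ha y hy, hb y hy]
  zero_mem' := by simp
  smul_mem' := by
    intro c a ha y hy
    simp [ha y hy]

/-- Pullback of a 2-form along a linear map. -/
def pb (φ : V →ₗ[ℝ] W) (B : W →ₗ[ℝ] Module.Dual ℝ W) : V →ₗ[ℝ] Module.Dual ℝ V :=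
  φ.dualMap ∘ₗ B ∘ₗ φ

/-- The Dirac structure associated to a pair `(R, Ω)` of a subspace and a skew form on it. -/
def diracOfForm (R : Submodule ℝ V) (Ω : R →ₗ[ℝ] Module.Dual ℝ R) :
    Submodule ℝ (V × Module.Dual ℝ V) where
  carrier := {p | ∃ hx : p.1 ∈ R, ∀ y : R, p.2 y = Ω ⟨p.1, hx⟩ y}
  add_mem' := by
    rintro a b ⟨ha, Ha⟩ ⟨hb, Hb⟩
    refine ⟨R.add_mem ha hb, fun y => ?_⟩
    have h : (⟨(a + b).1, R.add_mem ha hb⟩ : R) = ⟨a.1, ha⟩ + ⟨b.1, hb⟩ := rfl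
    rw [h, map_add]
    simp [Prod.snd_add, Ha y, Hb y]
  zero_mem' := by
    refine ⟨R.zero_mem, fun y => ?_⟩
    have h : (⟨((0 : V × Module.Dual ℝ V)).1, R.zero_mem⟩ : R) = 0 := rfl
    rw [h, map_zero]
    rfl
  smul_mem' := by
    rintro c a ⟨ha, Ha⟩
    refine ⟨R.smul_mem c ha, fun y => ?_⟩
    have h : (⟨(c • a).1, R.smul_mem c ha⟩ : R) = c • ⟨a.1, ha⟩ := rfl
    rw [h, map_smul]
    simp [Prod.smul_snd, Ha y]

/-! The gauge transform `τ_B` changes the pairing of two elements by the symmetric part of `B`,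
which vanishes for skew `B`; so `τ_B` preserves isotropy. Its inverse `τ_{-B}` is again a
skew gauge transform and both are monotone, so `τ_B` also preserves maximality. -/

section Gauge

variable {E : Type*} [AddCommGroup E] [Module ℝ E]

@[simp]
lemma mem_tau (B : E →ₗ[ℝ] Module.Dual ℝ E) (L : Submodule ℝ (E × Module.Dual ℝ E))
    (p : E × Module.Dual ℝ E) : p ∈ tau B L ↔ (p.1, p.2 - B p.1) ∈ L := Iff.rfl

lemma tau_zero (L : Submodule ℝ (E × Module.Dual ℝ E)) :
    tau (0 : E →ₗ[ℝ] Module.Dual ℝ E) L = L := by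
  ext p
  simp

lemma tau_add (B B' : E →ₗ[ℝ] Module.Dual ℝ E) (L : Submodule ℝ (E × Module.Dual ℝ E)) :
    tau (B + B') L = tau B (tau B' L) := by
  ext p
  simp [sub_add_eq_sub_sub]

lemma tau_neg_tau (B : E →ₗ[ℝ] Module.Dual ℝ E) (L : Submodule ℝ (E × Module.Dual ℝ E)) :
    tau (-B) (tau B L) = L := by
  rw [← tau_add, show -B + B = 0 from neg_add_cancel B, tau_zero]

lemma tau_tau_neg (B : E →ₗ[ℝ] Module.Dual ℝ E) (L : Submodule ℝ (E × Module.Dual ℝ E)) :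
    tau B (tau (-B) L) = L := by
  rw [← tau_add, show B + -B = 0 from add_neg_cancel B, tau_zero]

lemma tau_mono (B : E →ₗ[ℝ] Module.Dual ℝ E) {L L' : Submodule ℝ (E × Module.Dual ℝ E)}
    (h : L ≤ L') : tau B L ≤ tau B L' :=
  fun _ hp => h hp

lemma diracPairing_sub_apply (B : E →ₗ[ℝ] Module.Dual ℝ E) (p q : E × Module.Dual ℝ E) :
    diracPairing (p.1, p.2 - B p.1) (q.1, q.2 - B q.1) =
      diracPairing p q - (B p.1 q.1 + B q.1 p.1) / 2 := by
  simp only [diracPairing, LinearMap.sub_apply]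
  ring

lemma isIsotropic_tau {B : E →ₗ[ℝ] Module.Dual ℝ E} (hB : ∀ x y : E, B x y = - B y x)
    {L : Submodule ℝ (E × Module.Dual ℝ E)} (hL : IsIsotropic L) : IsIsotropic (tau B L) := by
  intro p hp q hq
  have h := hL _ hp _ hq
  rw [diracPairing_sub_apply, hB p.1 q.1, neg_add_cancel, zero_div, sub_zero] at h
  exact h

lemma isDirac_tau {B : E →ₗ[ℝ] Module.Dual ℝ E} (hB : ∀ x y : E, B x y = - B y x)
    {L : Submodule ℝ (E × Module.Dual ℝ E)} (hL : IsDirac L) : IsDirac (tau B L) := by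
  refine ⟨isIsotropic_tau hB hL.1, fun L' hL' hle => ?_⟩
  have hB' : ∀ x y : E, (-B) x y = - (-B) y x := fun x y => by simp [hB x y]
  have hL'_eq : tau (-B) L' = L :=
    hL.2 _ (isIsotropic_tau hB' hL') (by simpa only [tau_neg_tau] using tau_mono (-B) hle)
  rw [← hL'_eq, tau_tau_neg]

end Gauge

/-- Gauge transformations preserve Dirac structures and define an action of
the additive group of skew-symmetric bilinear forms. -/
theorem stmt_12 :
    (∀ B : V →ₗ[ℝ] Module.Dual ℝ V, (∀ x y : V, B x y = - B y x) →
      ∀ L : Submodule ℝ (V × Module.Dual ℝ V), IsDirac L → IsDirac (tau B L)) ∧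
    (∀ L : Submodule ℝ (V × Module.Dual ℝ V), tau (0 : V →ₗ[ℝ] Module.Dual ℝ V) L = L) ∧
    (∀ (B B' : V →ₗ[ℝ] Module.Dual ℝ V) (L : Submodule ℝ (V × Module.Dual ℝ V)),
      tau (B + B') L = tau B (tau B' L)) :=
  ⟨fun _ hB _ hL => isDirac_tau hB hL, tau_zero, tau_add⟩
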